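/- arXiv:2604.06908 — 4 statements merged into one kernel-verified Lean document; each statement's English description precedes it below -/
import Mathlib

section
/- Let α > 0 with α ≠ 1, and let ρ and σ be density matrices on ℂ^n with σ positive definite. Then the quantum relative α-entropy is nonnegative: S_α(ρ‖σ) ≥ 0, and S_α(ρ‖σ) = 0 if and only if ρ = σ. -/
/-! In the eigenbases `v k` of `ρ` and `u i` of `σ`, each trace in `S_α(ρ‖σ)` is a sum over
pairs `(k, i)` weighted by `‖⟨v k, u i⟩‖²`, so `S_α(ρ‖σ)` is a classical relative α-entropy of
the eigenvalues `p k` of `ρ` against the eigenvalues `q i` of `σ`. That one is nonnegative by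
Jensen's inequality for `t ↦ t ^ α` (concave for `α < 1`, convex for `α > 1`) with weights
`‖⟨v k, u i⟩‖² q i ^ α` at the points `p k / q i`. In the equality case `p k = c q i` whenever
`⟨v k, u i⟩ ≠ 0`, which forces `ρ = c σ`, and `c = 1` by comparing traces. -/

open Matrix ComplexOrder

/-- Real power of a Hermitian matrix via its spectral decomposition:
`A ^ r = ∑ i, (λ i) ^ r |x i⟩⟨x i|` (and `0` if `A` is not Hermitian). -/
noncomputable def mRpow {m : Type*} [Fintype m] [DecidableEq m]
    (A : Matrix m m ℂ) (r : ℝ) : Matrix m m ℂ :=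
  if hA : A.IsHermitian then
    (hA.eigenvectorUnitary : Matrix m m ℂ) *
      Matrix.diagonal (fun i => ((hA.eigenvalues i ^ r : ℝ) : ℂ)) *
      star (hA.eigenvectorUnitary : Matrix m m ℂ)
  else 0

/-- The quantum relative α-entropy
`S_α(ρ‖σ) = (α/(1−α))·log Tr(ρ σ^{α−1}) − (1/(1−α))·log Tr(ρ^α) + log Tr(σ^α)`. -/
noncomputable def Salpha {m : Type*} [Fintype m] [DecidableEq m]
    (α : ℝ) (ρ σ : Matrix m m ℂ) : ℝ :=
  α / (1 - α) * Real.log ((ρ * mRpow σ (α - 1)).trace.re)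
    - 1 / (1 - α) * Real.log ((mRpow ρ α).trace.re)
    + Real.log ((mRpow σ α).trace.re)

namespace Matrix.IsHermitian

variable {m : Type*} [Fintype m] [DecidableEq m] {A B : Matrix m m ℂ}

theorem mRpow_eq (hA : A.IsHermitian) (r : ℝ) :
    mRpow A r = (hA.eigenvectorUnitary : Matrix m m ℂ) *
      diagonal (fun i => ((hA.eigenvalues i ^ r : ℝ) : ℂ)) *
      star (hA.eigenvectorUnitary : Matrix m m ℂ) :=
  dif_pos hA

theorem mRpow_one (hA : A.IsHermitian) : mRpow A 1 = A := by
  conv_rhs => rw [hA.spectral_theorem, Unitary.conjStarAlgAut_apply]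
  simp [hA.mRpow_eq, Function.comp_def]

theorem mRpow_zero (hA : A.IsHermitian) : mRpow A 0 = 1 := by
  simp [hA.mRpow_eq]

theorem mRpow_mul_mRpow (hA : A.IsHermitian) {a b : ℝ} (h : ∀ i, 0 < hA.eigenvalues i) :
    mRpow A a * mRpow A b = mRpow A (a + b) := by
  simp only [hA.mRpow_eq, Matrix.mul_assoc]
  rw [← Matrix.mul_assoc (star _), Unitary.coe_star_mul_self, Matrix.one_mul,
    ← Matrix.mul_assoc (diagonal _), diagonal_mul_diagonal]
  simp [Real.rpow_add (h _)]

/-- `eigenOverlap hA hB k i = ‖⟨v k, u i⟩‖²` for the eigenbases `v` of `A` and `u` of `B`. -/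
noncomputable def eigenOverlap (hA : A.IsHermitian) (hB : B.IsHermitian) (k i : m) : ℝ :=
  Complex.normSq ((star (hA.eigenvectorUnitary : Matrix m m ℂ) * hB.eigenvectorUnitary) k i)

theorem trace_mRpow_mul_mRpow (hA : A.IsHermitian) (hB : B.IsHermitian) (a b : ℝ) :
    (mRpow A a * mRpow B b).trace = ((∑ k, ∑ i,
      hA.eigenOverlap hB k i * hA.eigenvalues k ^ a * hB.eigenvalues i ^ b : ℝ) : ℂ) := by
  set X := star (hA.eigenvectorUnitary : Matrix m m ℂ) * hB.eigenvectorUnitary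
  have hcycle : (mRpow A a * mRpow B b).trace =
      (diagonal (fun k => ((hA.eigenvalues k ^ a : ℝ) : ℂ)) *
        (X * diagonal (fun i => ((hB.eigenvalues i ^ b : ℝ) : ℂ)) * star X)).trace := by
    rw [hA.mRpow_eq, hB.mRpow_eq]
    simp only [Matrix.mul_assoc]
    rw [trace_mul_comm]
    simp only [X, star_mul, star_star, Matrix.mul_assoc]
  rw [hcycle]
  simp only [trace, diag, diagonal_mul]
  simp only [mul_apply, diagonal_apply, mul_ite, mul_zero, Finset.sum_ite_eq', Finset.mem_univ,
    if_true, star_apply, Finset.mul_sum]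
  push_cast
  refine Finset.sum_congr rfl fun k _ => Finset.sum_congr rfl fun i _ => ?_
  rw [eigenOverlap, Complex.normSq_eq_conj_mul_self, RCLike.star_def]
  ring

theorem eq_smul_of_eigenOverlap_ne_zero (hA : A.IsHermitian) (hB : B.IsHermitian) (c : ℝ)
    (h : ∀ k i, hA.eigenOverlap hB k i ≠ 0 → hA.eigenvalues k = c * hB.eigenvalues i) :
    A = (c : ℂ) • B := by
  set V := (hA.eigenvectorUnitary : Matrix m m ℂ)
  set U := (hB.eigenvectorUnitary : Matrix m m ℂ)
  set P := diagonal (fun k => (hA.eigenvalues k : ℂ))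
  set Q := diagonal (fun i => (hB.eigenvalues i : ℂ))
  have hAV : A = V * P * star V := by
    simpa [Unitary.conjStarAlgAut_apply, Function.comp_def] using hA.spectral_theorem
  have hBU : B = U * Q * star U := by
    simpa [Unitary.conjStarAlgAut_apply, Function.comp_def] using hB.spectral_theorem
  have hU : U * star U = 1 := Unitary.coe_mul_star_self _
  have hV : V * star V = 1 := Unitary.coe_mul_star_self _
  have hintertwine : (c : ℂ) • (Q * (star U * V)) = star U * V * P := by
    ext i k
    by_cases hX : (star V * U) k i = 0
    · have hX' : (star U * V) i k = 0 := by
        rw [← star_star (star U * V), star_mul, star_star, star_apply, hX, star_zero]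
      simp [Q, P, hX']
    · have := h k i (by simpa [eigenOverlap] using hX)
      simp [Q, P, this]
      ring
  calc A = V * P * star V := hAV
    _ = U * (star U * V * P) * star V := by
      simp only [← Matrix.mul_assoc, hU, Matrix.one_mul]
    _ = (c : ℂ) • B := by
      rw [← hintertwine, hBU]
      simp only [Matrix.mul_smul, Matrix.smul_mul, Matrix.mul_assoc, hV, Matrix.mul_one]

end Matrix.IsHermitian

section RpowJensenGap

variable {ι : Type*} [Fintype ι] {s : ℝ} {μ t : ι → ℝ}

theorem exists_eq_of_rpow_sum_eq_sum_rpow (hs : 0 < s) (hs1 : s ≠ 1)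
    (hμ : ∀ j, 0 ≤ μ j) (hμ1 : ∑ j, μ j = 1) (ht : ∀ j, 0 ≤ t j)
    (h : (∑ j, μ j * t j) ^ s = ∑ j, μ j * t j ^ s) :
    ∃ c, ∀ j, μ j ≠ 0 → t j = c := by
  have hconst : ∀ j, μ j ≠ 0 → ∀ k, μ k ≠ 0 → t j = t k := by
    simp only [← smul_eq_mul] at h
    rcases hs1.lt_or_gt with hlt | hgt
    · have := ((Real.strictConcaveOn_rpow hs hlt).map_sum_eq_iff_of_nonneg
        (t := Finset.univ) (fun j _ => hμ j) hμ1 (fun j _ => ht j)).1 h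
      exact fun j hj k hk => this (Finset.mem_univ j) hj (Finset.mem_univ k) hk
    · have := ((strictConvexOn_rpow hgt).map_sum_eq_iff_of_nonneg
        (t := Finset.univ) (fun j _ => hμ j) hμ1 (fun j _ => ht j)).1 h
      exact fun j hj k hk => this (Finset.mem_univ j) hj (Finset.mem_univ k) hk
  by_cases hsupp : ∃ k, μ k ≠ 0
  · obtain ⟨k, hk⟩ := hsupp
    exact ⟨t k, fun j hj => hconst j hj k hk⟩
  · push Not at hsupp
    exact ⟨0, fun j hj => absurd (hsupp j) hj⟩

/-- Jensen gap of `t ↦ t ^ s` for the weights `μ`, on a log scale; the factor `(1 - s)⁻¹` makes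
it nonnegative on both sides of `s = 1`. -/
noncomputable def rpowJensenGap (s : ℝ) (μ t : ι → ℝ) : ℝ :=
  (1 - s)⁻¹ * (Real.log ((∑ j, μ j * t j) ^ s) - Real.log (∑ j, μ j * t j ^ s))

theorem sum_mul_rpow_pos (hμ : ∀ j, 0 ≤ μ j) (ht : ∀ j, 0 ≤ t j) {j₀ : ι} (hμ₀ : 0 < μ j₀)
    (ht₀ : 0 < t j₀) (s : ℝ) : 0 < ∑ j, μ j * t j ^ s :=
  Finset.sum_pos' (fun j _ => mul_nonneg (hμ j) (Real.rpow_nonneg (ht j) s))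
    ⟨j₀, Finset.mem_univ _, mul_pos hμ₀ (Real.rpow_pos_of_pos ht₀ s)⟩

theorem rpowJensenGap_nonneg (hs : 0 < s) (hs1 : s ≠ 1) (hμ : ∀ j, 0 ≤ μ j)
    (hμ1 : ∑ j, μ j = 1) (ht : ∀ j, 0 ≤ t j) {j₀ : ι} (hμ₀ : 0 < μ j₀) (ht₀ : 0 < t j₀) :
    0 ≤ rpowJensenGap s μ t := by
  have hmean : 0 < ∑ j, μ j * t j := by
    simpa using sum_mul_rpow_pos hμ ht hμ₀ ht₀ 1
  rcases hs1.lt_or_gt with hlt | hgt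
  · have hjensen := (Real.concaveOn_rpow hs.le hlt.le).le_map_sum (t := Finset.univ)
      (fun j _ => hμ j) hμ1 (fun j _ => ht j)
    simp only [smul_eq_mul] at hjensen
    exact mul_nonneg (inv_nonneg.2 (by linarith))
      (sub_nonneg.2 (Real.log_le_log (sum_mul_rpow_pos hμ ht hμ₀ ht₀ s) hjensen))
  · have hjensen := (convexOn_rpow hgt.le).map_sum_le (t := Finset.univ)
      (fun j _ => hμ j) hμ1 (fun j _ => ht j)
    simp only [smul_eq_mul] at hjensen
    exact mul_nonneg_of_nonpos_of_nonpos (inv_nonpos.2 (by linarith))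
      (sub_nonpos.2 (Real.log_le_log (by positivity) hjensen))

theorem exists_eq_of_rpowJensenGap_eq_zero (hs : 0 < s) (hs1 : s ≠ 1) (hμ : ∀ j, 0 ≤ μ j)
    (hμ1 : ∑ j, μ j = 1) (ht : ∀ j, 0 ≤ t j) {j₀ : ι} (hμ₀ : 0 < μ j₀) (ht₀ : 0 < t j₀)
    (h : rpowJensenGap s μ t = 0) : ∃ c, ∀ j, μ j ≠ 0 → t j = c := by
  have hmean : 0 < ∑ j, μ j * t j := by
    simpa using sum_mul_rpow_pos hμ ht hμ₀ ht₀ 1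
  rw [rpowJensenGap, mul_eq_zero, inv_eq_zero, sub_eq_zero, sub_eq_zero] at h
  exact exists_eq_of_rpow_sum_eq_sum_rpow hs hs1 hμ hμ1 ht <| Real.log_injOn_pos
    (Real.rpow_pos_of_pos hmean s) (sum_mul_rpow_pos hμ ht hμ₀ ht₀ s) (h.resolve_left hs1.symm)

end RpowJensenGap

section RelAlphaEntropy

variable {ι : Type*} [Fintype ι]

/-- Classical analogue of `Salpha`; for `w = 1` it is the relative `α`-entropy of the
distributions `x` and `y`. -/
noncomputable def relAlphaEntropy (α : ℝ) (w x y : ι → ℝ) : ℝ :=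
  α / (1 - α) * Real.log (∑ j, w j * x j * y j ^ (α - 1))
    - 1 / (1 - α) * Real.log (∑ j, w j * x j ^ α)
    + Real.log (∑ j, w j * y j ^ α)

variable {α : ℝ} {w x y : ι → ℝ}

theorem relAlphaEntropy_eq_rpowJensenGap (hα1 : α ≠ 1) (hw : ∀ j, 0 ≤ w j)
    (hx : ∀ j, 0 ≤ x j) (hy : ∀ j, 0 < y j) {j₀ : ι} (hw₀ : 0 < w j₀) (hx₀ : 0 < x j₀) :
    relAlphaEntropy α w x y = rpowJensenGap α
      (fun j => w j * y j ^ α / ∑ k, w k * y k ^ α) (fun j => x j / y j) := by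
  have hyα : ∀ j, 0 < y j ^ α := fun j => Real.rpow_pos_of_pos (hy j) α
  set X := ∑ j, w j * x j * y j ^ (α - 1)
  set P := ∑ j, w j * x j ^ α
  set Y := ∑ j, w j * y j ^ α
  have hX : 0 < X :=
    Finset.sum_pos' (fun j _ => by have := hw j; have := hx j; have := hy j; positivity)
      ⟨j₀, Finset.mem_univ _, by have := hy j₀; positivity⟩
  have hP : 0 < P := sum_mul_rpow_pos hw hx hw₀ hx₀ α
  have hY : 0 < Y := sum_mul_rpow_pos hw (fun j => (hy j).le) hw₀ (hy j₀) α
  have hmean : ∑ j, w j * y j ^ α / Y * (x j / y j) = X / Y := by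
    rw [Finset.sum_div]
    refine Finset.sum_congr rfl fun j _ => ?_
    rw [Real.rpow_sub_one (hy j).ne']
    field_simp
  have hpow : ∑ j, w j * y j ^ α / Y * (x j / y j) ^ α = P / Y := by
    rw [Finset.sum_div]
    refine Finset.sum_congr rfl fun j _ => ?_
    rw [Real.div_rpow (hx j) (hy j).le]
    have := hyα j
    field_simp
  have h1α : 1 - α ≠ 0 := sub_ne_zero.2 hα1.symm
  rw [rpowJensenGap, hmean, hpow, Real.log_rpow (div_pos hX hY), Real.log_div hX.ne' hY.ne',
    Real.log_div hP.ne' hY.ne', relAlphaEntropy]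
  field_simp
  ring

theorem relAlphaEntropy_nonneg_and_exists_eq_mul (hα : 0 < α) (hα1 : α ≠ 1)
    (hw : ∀ j, 0 ≤ w j) (hx : ∀ j, 0 ≤ x j) (hy : ∀ j, 0 < y j)
    (hwx : 0 < ∑ j, w j * x j) :
    0 ≤ relAlphaEntropy α w x y ∧
      (relAlphaEntropy α w x y = 0 → ∃ c, ∀ j, w j ≠ 0 → x j = c * y j) := by
  obtain ⟨j₀, -, hj₀⟩ : ∃ j ∈ Finset.univ, (0 : ℝ) < w j * x j :=
    Finset.exists_lt_of_sum_lt (by simpa using hwx)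
  have hw₀ : 0 < w j₀ := pos_of_mul_pos_left hj₀ (hx j₀)
  have hx₀ : 0 < x j₀ := pos_of_mul_pos_right hj₀ (hw j₀)
  have hY : 0 < ∑ k, w k * y k ^ α := sum_mul_rpow_pos hw (fun j => (hy j).le) hw₀ (hy j₀) α
  have hμ : ∀ j, 0 ≤ w j * y j ^ α / ∑ k, w k * y k ^ α := fun j => by
    have := hw j; have := hy j; positivity
  have hμ1 : ∑ j, w j * y j ^ α / ∑ k, w k * y k ^ α = 1 := by
    rw [← Finset.sum_div, div_self hY.ne']
  have hμ₀ : 0 < w j₀ * y j₀ ^ α / ∑ k, w k * y k ^ α := by have := hy j₀; positivity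
  have ht : ∀ j, 0 ≤ x j / y j := fun j => div_nonneg (hx j) (hy j).le
  rw [relAlphaEntropy_eq_rpowJensenGap hα1 hw hx hy hw₀ hx₀]
  refine ⟨rpowJensenGap_nonneg hα hα1 hμ hμ1 ht hμ₀ (div_pos hx₀ (hy j₀)), fun h => ?_⟩
  obtain ⟨c, hc⟩ := exists_eq_of_rpowJensenGap_eq_zero hα hα1 hμ hμ1 ht hμ₀
    (div_pos hx₀ (hy j₀)) h
  refine ⟨c, fun j hj => (div_eq_iff (hy j).ne').1 (hc j ?_)⟩
  have := Real.rpow_pos_of_pos (hy j) α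
  positivity

end RelAlphaEntropy

section Salpha

variable {m : Type*} [Fintype m] [DecidableEq m]

theorem Salpha_eq_relAlphaEntropy {α : ℝ} {ρ σ : Matrix m m ℂ} (hρ : ρ.IsHermitian)
    (hσ : σ.IsHermitian) :
    Salpha α ρ σ = relAlphaEntropy α (fun j : m × m => hρ.eigenOverlap hσ j.1 j.2)
      (fun j => hρ.eigenvalues j.1) (fun j => hσ.eigenvalues j.2) := by
  have hT1 := hρ.trace_mRpow_mul_mRpow hσ 1 (α - 1)
  have hT2 := hρ.trace_mRpow_mul_mRpow hσ α 0
  have hT3 := hρ.trace_mRpow_mul_mRpow hσ 0 α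
  rw [hρ.mRpow_one] at hT1
  rw [hσ.mRpow_zero, Matrix.mul_one] at hT2
  rw [hρ.mRpow_zero, Matrix.one_mul] at hT3
  simp only [Salpha, relAlphaEntropy, hT1, hT2, hT3, Complex.ofReal_re, Fintype.sum_prod_type,
    Real.rpow_one, Real.rpow_zero, mul_one]

theorem Salpha_self {α : ℝ} (hα1 : α ≠ 1) {σ : Matrix m m ℂ} (hσ : σ.PosDef) :
    Salpha α σ σ = 0 := by
  have hσH := hσ.isHermitian
  have hmul : σ * mRpow σ (α - 1) = mRpow σ α := by
    conv_lhs => arg 1; rw [← hσH.mRpow_one]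
    rw [hσH.mRpow_mul_mRpow hσ.eigenvalues_pos, add_sub_cancel]
  have h1α : 1 - α ≠ 0 := sub_ne_zero.2 hα1.symm
  rw [Salpha, hmul]
  field_simp
  ring

end Salpha

/-- Nonnegativity of the quantum relative α-entropy, with equality iff the states agree. -/
theorem Salpha_nonneg_and_eq_zero_iff {n : ℕ} (α : ℝ) (hα : 0 < α) (hα1 : α ≠ 1)
    (ρ σ : Matrix (Fin n) (Fin n) ℂ)
    (hρ : ρ.PosSemidef) (hρ1 : ρ.trace = 1)
    (hσ : σ.PosDef) (hσ1 : σ.trace = 1) :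
    0 ≤ Salpha α ρ σ ∧ (Salpha α ρ σ = 0 ↔ ρ = σ) := by
  have hρH := hρ.isHermitian
  have hσH := hσ.isHermitian
  have htrace : ∑ j : Fin n × Fin n, hρH.eigenOverlap hσH j.1 j.2 * hρH.eigenvalues j.1 = 1 := by
    have h := hρH.trace_mRpow_mul_mRpow hσH 1 0
    rw [hρH.mRpow_one, hσH.mRpow_zero, Matrix.mul_one, hρ1] at h
    simp only [Real.rpow_one, Real.rpow_zero, mul_one] at h
    rw [Fintype.sum_prod_type]
    exact_mod_cast h.symm
  obtain ⟨hnonneg, hzero⟩ := relAlphaEntropy_nonneg_and_exists_eq_mul hα hα1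
    (w := fun j : Fin n × Fin n => hρH.eigenOverlap hσH j.1 j.2)
    (fun _ => Complex.normSq_nonneg _) (fun j => hρ.eigenvalues_nonneg j.1)
    (fun j => hσ.eigenvalues_pos j.2)
    (htrace ▸ one_pos)
  refine ⟨Salpha_eq_relAlphaEntropy hρH hσH ▸ hnonneg, fun h => ?_, ?_⟩
  · obtain ⟨c, hc⟩ := hzero (Salpha_eq_relAlphaEntropy hρH hσH ▸ h)
    have hρc := hρH.eq_smul_of_eigenOverlap_ne_zero hσH c
      (fun k i hki => hc (k, i) hki)
    have hc1 : (c : ℂ) = 1 := by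
      simpa [hρ1, hσ1] using (congrArg trace hρc).symm
    rwa [hc1, one_smul] at hρc
  · rintro rfl
    exact Salpha_self hα1 hσ
end

section
/- Let ρ, σ, τ, ω be pairwise commuting positive definite density matrices on ℂ^n, let t ∈ [0,1], and let α > 1. With M_{ρ,σ}^t = ρ^t σ^{1−t} / Tr(ρ^t σ^{1−t}), the Petz–Rényi α-relative entropy satisfies the generalized convexity inequality D̂_α(M_{ρ,σ}^t ‖ M_{τ,ω}^t) ≤ t·D̂_α(ρ‖τ) + (1−t)·D̂_α(σ‖ω) + (α/(1−α))·log Tr(ρ^t σ^{1−t}) + log Tr(τ^t ω^{1−t}). For α ∈ (0,1) the reverse inequality holds. -/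
open Matrix ComplexOrder

/-- The generalized mixture `M_{ρ,σ}^t = ρ^t σ^{1−t} / Tr(ρ^t σ^{1−t})`. -/
noncomputable def genMix {m : Type*} [Fintype m] [DecidableEq m]
    (t : ℝ) (ρ σ : Matrix m m ℂ) : Matrix m m ℂ :=
  ((mRpow ρ t * mRpow σ (1 - t)).trace)⁻¹ • (mRpow ρ t * mRpow σ (1 - t))

/-- The Petz–Rényi α-relative entropy `D̂_α(ρ‖σ) = (1/(α−1))·log Tr(ρ^α σ^{1−α})`. -/
noncomputable def petzRenyi {m : Type*} [Fintype m] [DecidableEq m]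
    (α : ℝ) (ρ σ : Matrix m m ℂ) : ℝ :=
  1 / (α - 1) * Real.log ((mRpow ρ α * mRpow σ (1 - α)).trace.re)

/-!
Commuting positive definite matrices are diagonal in one orthonormal basis, with joint
eigenvalues `p, q, u, w > 0`, so every trace in the statement is a sum over that basis. Writing
`g_t(x, y) = x^t y^(1-t)` entrywise, `a = ∑ g_t(p, q)` and `b = ∑ g_t(u, w)`, the left-hand side is
`(α - 1)⁻¹ (log Z - α log a - (1 - α) log b)` with `Z = ∑ g_t(g_α(p, u), g_α(q, w))`, while the
right-hand side is the same expression with `log Z` replaced by `t log X + (1 - t) log Y`,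
`X = ∑ g_α(p, u)`, `Y = ∑ g_α(q, w)`. Hölder's inequality `Z ≤ X^t Y^(1-t)` finishes the proof;
the sign of `α - 1` decides the direction.
-/

open Unitary Module Real

lemma LinearMap.IsSymmetric.exists_orthonormalBasis_apply_eq_smul_of_commute
    {𝕜 E ι m : Type*} [RCLike 𝕜] [NormedAddCommGroup E] [InnerProductSpace 𝕜 E]
    [FiniteDimensional 𝕜 E] [Fintype m] {T : ι → E →ₗ[𝕜] E} (hT : ∀ i, (T i).IsSymmetric)
    (hTc : Pairwise fun i j => Commute (T i) (T j)) (hm : finrank 𝕜 E = Fintype.card m) :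
    ∃ (b : OrthonormalBasis m 𝕜 E) (d : ι → m → ℝ), ∀ i k, T i (b k) = (d i k : 𝕜) • b k := by
  classical
  let V : (ι → 𝕜) → Submodule 𝕜 E := fun χ => ⨅ i, End.eigenspace (T i) (χ i)
  have hV : DirectSum.IsInternal V := directSum_isInternal_of_pairwise_commute hT hTc
  have : Fintype {χ // V χ ≠ ⊥} := hV.submodule_iSupIndep.fintypeNeBotOfFiniteDimensional
  have hV' : DirectSum.IsInternal fun χ : {χ // V χ ≠ ⊥} => V χ :=
    DirectSum.isInternal_ne_bot_iff.mpr hV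
  have hVo : OrthogonalFamily 𝕜 (fun χ : {χ // V χ ≠ ⊥} => V χ) fun χ => (V χ).subtypeₗᵢ :=
    (orthogonalFamily_iInf_eigenspaces hT).comp Subtype.val_injective
  let b := (hV'.subordinateOrthonormalBasis hm hVo).reindex (Fintype.equivFin m).symm
  have hb : ∀ k, ∃ χ : ι → 𝕜, ∀ i, T i (b k) = χ i • b k := fun k => by
    refine ⟨(hV'.subordinateOrthonormalBasisIndex hm (Fintype.equivFin m k) hVo).1, fun i => ?_⟩
    rw [OrthonormalBasis.reindex_apply, Equiv.symm_symm]
    exact End.mem_eigenspace_iff.mp <| (Submodule.mem_iInf _).mp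
      (hV'.subordinateOrthonormalBasis_subordinate hm (Fintype.equivFin m k) hVo) i
  choose χ hχ using hb
  refine ⟨b, fun i k => RCLike.re (χ k i), fun i k => ?_⟩
  have hμ : End.HasEigenvalue (T i) (χ k i) :=
    End.hasEigenvalue_of_hasEigenvector ⟨End.mem_eigenspace_iff.mpr (hχ k i), b.toBasis.ne_zero k⟩
  rw [hχ k i, ← RCLike.conj_eq_iff_re.mp ((hT i).conj_eigenvalue_eq_self hμ)]

section ConjDiagonal

variable {m : Type*} [Fintype m] [DecidableEq m]

noncomputable def conjDiagonal (U : unitaryGroup m ℂ) (d : m → ℝ) : Matrix m m ℂ :=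
  conjStarAlgAut ℂ _ U (diagonal fun i => (d i : ℂ))

lemma conjDiagonal_mul_conjDiagonal (U : unitaryGroup m ℂ) (d e : m → ℝ) :
    conjDiagonal U d * conjDiagonal U e = conjDiagonal U (d * e) := by
  simp only [conjDiagonal, ← map_mul, diagonal_mul_diagonal, Pi.mul_apply, Complex.ofReal_mul]

lemma smul_conjDiagonal (U : unitaryGroup m ℂ) (c : ℝ) (d : m → ℝ) :
    (c : ℂ) • conjDiagonal U d = conjDiagonal U (c • d) := by
  rw [conjDiagonal, conjDiagonal, ← map_smul, ← diagonal_smul]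
  congr with i
  simp

lemma trace_conjDiagonal (U : unitaryGroup m ℂ) (d : m → ℝ) :
    (conjDiagonal U d).trace = ((∑ i, d i : ℝ) : ℂ) := by
  rw [conjDiagonal, conjStarAlgAut_apply, trace_mul_cycle, coe_star_mul_self, one_mul,
    trace_diagonal, Complex.ofReal_sum]

lemma isHermitian_conjDiagonal (U : unitaryGroup m ℂ) (d : m → ℝ) :
    (conjDiagonal U d).IsHermitian :=
  isHermitian_mul_mul_conjTranspose _
    (isHermitian_diagonal_of_self_adjoint _ (funext fun i => Complex.conj_ofReal (d i)))

lemma posDef_conjDiagonal_iff (U : unitaryGroup m ℂ) (d : m → ℝ) :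
    (conjDiagonal U d).PosDef ↔ ∀ i, 0 < d i := by
  simp [conjDiagonal, isUnit_coe.posDef_star_right_conjugate_iff]

lemma diagonal_comp_mul_eq_mul_diagonal_comp {d e : m → ℝ} {W : Matrix m m ℂ}
    (h : diagonal (fun i => (d i : ℂ)) * W = W * diagonal fun i => (e i : ℂ)) (f : ℝ → ℝ) :
    diagonal (fun i => (f (d i) : ℂ)) * W = W * diagonal fun i => (f (e i) : ℂ) := by
  ext i j
  have hij : W i j * d i = W i j * e j := by
    simpa only [diagonal_mul, mul_diagonal, mul_comm (d i : ℂ)] using congrFun₂ h i j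
  simp only [diagonal_mul, mul_diagonal]
  -- an entry `W i j ≠ 0` forces `d i = e j`
  rcases eq_or_ne (W i j) 0 with hW | hW
  · simp [hW]
  · rw [mul_comm, Complex.ofReal_injective (mul_left_cancel₀ hW hij)]

lemma conjDiagonal_comp_eq_of_eq {U V : unitaryGroup m ℂ} {d e : m → ℝ}
    (h : conjDiagonal U d = conjDiagonal V e) (f : ℝ → ℝ) :
    conjDiagonal U (f ∘ d) = conjDiagonal V (f ∘ e) := by
  simp only [conjDiagonal, conjStarAlgAut_apply, Function.comp_apply] at h ⊢
  set U' : Matrix m m ℂ := (U : Matrix m m ℂ)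
  set V' : Matrix m m ℂ := (V : Matrix m m ℂ)
  have hU : star U' * U' = 1 := coe_star_mul_self U
  have hU' : U' * star U' = 1 := coe_mul_star_self U
  have hV : star V' * V' = 1 := coe_star_mul_self V
  have hV' : V' * star V' = 1 := coe_mul_star_self V
  have hintertwine : diagonal (fun i => (d i : ℂ)) * (star U' * V') =
      star U' * V' * diagonal fun i => (e i : ℂ) :=
    calc _ = star U' * (U' * diagonal (fun i => (d i : ℂ)) * star U') * V' := by
          simp only [← mul_assoc, hU, one_mul]
      _ = star U' * V' * diagonal fun i => (e i : ℂ) := by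
          rw [h]; simp only [mul_assoc, hV, mul_one]
  calc U' * diagonal (fun i => (f (d i) : ℂ)) * star U'
      = U' * (diagonal (fun i => (f (d i) : ℂ)) * (star U' * V')) * star V' := by
        simp only [← mul_assoc, mul_assoc _ V', hV', mul_one]
    _ = V' * diagonal (fun i => (f (e i) : ℂ)) * star V' := by
        rw [diagonal_comp_mul_eq_mul_diagonal_comp hintertwine f]
        simp only [← mul_assoc, hU', one_mul]

/-- `mRpow` diagonalizes with Mathlib's chosen eigenvector unitary; by
`conjDiagonal_comp_eq_of_eq` any other unitary diagonalization gives the same result. -/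
lemma mRpow_conjDiagonal (U : unitaryGroup m ℂ) (d : m → ℝ) (r : ℝ) :
    mRpow (conjDiagonal U d) r = conjDiagonal U fun i => d i ^ r := by
  have hA := isHermitian_conjDiagonal U d
  rw [mRpow, dif_pos hA]
  exact conjDiagonal_comp_eq_of_eq hA.spectral_theorem.symm (· ^ r)

lemma eq_conjDiagonal_of_mulVec_eq_smul (b : OrthonormalBasis m ℂ (EuclideanSpace ℂ m))
    {A : Matrix m m ℂ} {d : m → ℝ} (h : ∀ k, A *ᵥ b k = (d k : ℂ) • ⇑(b k)) :
    A = conjDiagonal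
      ⟨_, (EuclideanSpace.basisFun m ℂ).toMatrix_orthonormalBasis_mem_unitary b⟩ d := by
  set U : Matrix m m ℂ := (EuclideanSpace.basisFun m ℂ).toBasis.toMatrix b.toBasis
  have hU : U * star U = 1 :=
    mul_star_self_of_mem ((EuclideanSpace.basisFun m ℂ).toMatrix_orthonormalBasis_mem_unitary b)
  have hcol : A * U = U * diagonal fun i => (d i : ℂ) := by
    ext i k
    rw [mul_diagonal, mul_apply]
    simpa [U, Module.Basis.toMatrix_apply, mulVec, dotProduct, mul_comm] using congrFun (h k) i
  rw [conjDiagonal, conjStarAlgAut_apply]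
  change A = U * _ * star U
  rw [← hcol, mul_assoc, hU, mul_one]

lemma exists_conjDiagonal_of_commute {ι : Type*} (A : ι → Matrix m m ℂ)
    (hA : ∀ i, (A i).IsHermitian) (hAc : Pairwise fun i j => Commute (A i) (A j)) :
    ∃ (U : unitaryGroup m ℂ) (d : ι → m → ℝ), ∀ i, A i = conjDiagonal U (d i) := by
  have hTc : Pairwise fun i j => Commute (toEuclideanLin (A i)) (toEuclideanLin (A j)) :=
    fun i j hij => by
      simpa only [commute_iff_eq, End.mul_eq_comp, toLpLin_mul_same] using
        congrArg toEuclideanLin (hAc hij).eq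
  obtain ⟨b, d, hbd⟩ := LinearMap.IsSymmetric.exists_orthonormalBasis_apply_eq_smul_of_commute
    (fun i => isSymmetric_toEuclideanLin_iff.mpr (hA i)) hTc finrank_euclideanSpace
  exact ⟨_, d, fun i => eq_conjDiagonal_of_mulVec_eq_smul b fun k => by
    simpa using congrArg WithLp.ofLp (hbd i k)⟩

end ConjDiagonal

section GeomMix

variable {m : Type*}

noncomputable def geomMix (t : ℝ) (x y : m → ℝ) : m → ℝ := fun i => x i ^ t * y i ^ (1 - t)

noncomputable def classicalPetzRenyi [Fintype m] (α : ℝ) (x y : m → ℝ) : ℝ :=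
  1 / (α - 1) * log (∑ i, geomMix α x y i)

variable {x y : m → ℝ}

lemma geomMix_pos (t : ℝ) (hx : ∀ i, 0 < x i) (hy : ∀ i, 0 < y i) (i : m) :
    0 < geomMix t x y i :=
  mul_pos (rpow_pos_of_pos (hx i) t) (rpow_pos_of_pos (hy i) _)

lemma geomMix_smul_smul (α : ℝ) {a b : ℝ} (ha : 0 ≤ a) (hb : 0 ≤ b) (hx : ∀ i, 0 ≤ x i)
    (hy : ∀ i, 0 ≤ y i) :
    geomMix α (a • x) (b • y) = (a ^ α * b ^ (1 - α)) • geomMix α x y := by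
  ext i
  simp only [geomMix, Pi.smul_apply, smul_eq_mul, mul_rpow ha (hx i), mul_rpow hb (hy i)]
  ring

lemma geomMix_geomMix_comm (α t : ℝ) {p q u w : m → ℝ} (hp : ∀ i, 0 ≤ p i) (hq : ∀ i, 0 ≤ q i)
    (hu : ∀ i, 0 ≤ u i) (hw : ∀ i, 0 ≤ w i) :
    geomMix α (geomMix t p q) (geomMix t u w) = geomMix t (geomMix α p u) (geomMix α q w) := by
  ext i
  have := hp i; have := hq i; have := hu i; have := hw i
  simp only [geomMix]
  rw [mul_rpow (by positivity) (by positivity), mul_rpow (by positivity) (by positivity),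
    mul_rpow (by positivity) (by positivity), mul_rpow (by positivity) (by positivity),
    ← rpow_mul (hp i), ← rpow_mul (hq i), ← rpow_mul (hu i), ← rpow_mul (hw i),
    ← rpow_mul (hp i), ← rpow_mul (hq i), ← rpow_mul (hu i), ← rpow_mul (hw i)]
  ring_nf

/-- Hölder's inequality for the exponents `1 / t`, `1 / (1 - t)`, including the endpoints
`t = 0, 1` excluded by `Real.inner_le_Lp_mul_Lq`: sum the weighted AM-GM inequality for the
normalized vectors `x / ∑ x` and `y / ∑ y`. -/
lemma sum_geomMix_le [Fintype m] {t : ℝ} (ht0 : 0 ≤ t) (ht1 : t ≤ 1) (hx : ∀ i, 0 < x i)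
    (hy : ∀ i, 0 < y i) :
    ∑ i, geomMix t x y i ≤ (∑ i, x i) ^ t * (∑ i, y i) ^ (1 - t) := by
  rcases isEmpty_or_nonempty m with hm | hm
  · simp only [Finset.univ_eq_empty, Finset.sum_empty]
    positivity
  set X := ∑ i, x i
  set Y := ∑ i, y i
  have hX : 0 < X := Finset.sum_pos (fun i _ => hx i) Finset.univ_nonempty
  have hY : 0 < Y := Finset.sum_pos (fun i _ => hy i) Finset.univ_nonempty
  have hamgm : ∀ i, geomMix t x y i ≤ X ^ t * Y ^ (1 - t) * (t * (x i / X) + (1 - t) * (y i / Y)) :=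
    fun i => calc
      geomMix t x y i = X ^ t * Y ^ (1 - t) * ((x i / X) ^ t * (y i / Y) ^ (1 - t)) := by
        rw [geomMix, div_rpow (hx i).le hX.le, div_rpow (hy i).le hY.le]
        field_simp
      _ ≤ _ := by
        gcongr
        exact geom_mean_le_arith_mean2_weighted ht0 (by linarith)
          (div_nonneg (hx i).le hX.le) (div_nonneg (hy i).le hY.le)
          (by ring)
  calc ∑ i, geomMix t x y i
      ≤ ∑ i, X ^ t * Y ^ (1 - t) * (t * (x i / X) + (1 - t) * (y i / Y)) :=
        Finset.sum_le_sum fun i _ => hamgm i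
    _ = X ^ t * Y ^ (1 - t) * (t * (X / X) + (1 - t) * (Y / Y)) := by
        rw [← Finset.mul_sum, Finset.sum_add_distrib, ← Finset.mul_sum, ← Finset.mul_sum,
          ← Finset.sum_div, ← Finset.sum_div]
    _ = X ^ t * Y ^ (1 - t) := by
        rw [div_self hX.ne', div_self hY.ne']
        ring

lemma log_sum_geomMix_le [Fintype m] [Nonempty m] {t : ℝ} (ht0 : 0 ≤ t) (ht1 : t ≤ 1)
    (hx : ∀ i, 0 < x i) (hy : ∀ i, 0 < y i) :
    log (∑ i, geomMix t x y i) ≤ t * log (∑ i, x i) + (1 - t) * log (∑ i, y i) := by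
  have hX : 0 < ∑ i, x i := Finset.sum_pos (fun i _ => hx i) Finset.univ_nonempty
  have hY : 0 < ∑ i, y i := Finset.sum_pos (fun i _ => hy i) Finset.univ_nonempty
  have hZ : 0 < ∑ i, geomMix t x y i :=
    Finset.sum_pos (fun i _ => geomMix_pos t hx hy i) Finset.univ_nonempty
  rw [← log_rpow hX, ← log_rpow hY, ← log_mul (by positivity) (by positivity)]
  exact log_le_log hZ (sum_geomMix_le ht0 ht1 hx hy)

lemma log_sum_geomMix_inv_smul_inv_smul [Fintype m] [Nonempty m] (α : ℝ) {a b : ℝ} (ha : 0 < a)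
    (hb : 0 < b) (hx : ∀ i, 0 < x i) (hy : ∀ i, 0 < y i) :
    log (∑ i, geomMix α (a⁻¹ • x) (b⁻¹ • y) i)
      = log (∑ i, geomMix α x y i) - α * log a - (1 - α) * log b := by
  have hZ : 0 < ∑ i, geomMix α x y i :=
    Finset.sum_pos (fun i _ => geomMix_pos α hx hy i) Finset.univ_nonempty
  rw [geomMix_smul_smul α (inv_nonneg.mpr ha.le) (inv_nonneg.mpr hb.le) (fun i => (hx i).le)
    (fun i => (hy i).le)]
  simp only [Pi.smul_apply, smul_eq_mul, ← Finset.mul_sum]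
  rw [log_mul (by positivity) hZ.ne', log_mul (by positivity) (by positivity),
    log_rpow (inv_pos.mpr ha), log_rpow (inv_pos.mpr hb), log_inv, log_inv]
  ring

theorem classicalPetzRenyi_generalized_convexity [Fintype m] {α t : ℝ} (ht0 : 0 ≤ t)
    (ht1 : t ≤ 1) {p q u w : m → ℝ} (hp : ∀ i, 0 < p i) (hq : ∀ i, 0 < q i)
    (hu : ∀ i, 0 < u i) (hw : ∀ i, 0 < w i) :
    (1 < α →
      classicalPetzRenyi α ((∑ i, geomMix t p q i)⁻¹ • geomMix t p q)
          ((∑ i, geomMix t u w i)⁻¹ • geomMix t u w)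
        ≤ t * classicalPetzRenyi α p u + (1 - t) * classicalPetzRenyi α q w
          + α / (1 - α) * log (∑ i, geomMix t p q i) + log (∑ i, geomMix t u w i)) ∧
    (α < 1 →
      t * classicalPetzRenyi α p u + (1 - t) * classicalPetzRenyi α q w
          + α / (1 - α) * log (∑ i, geomMix t p q i) + log (∑ i, geomMix t u w i)
        ≤ classicalPetzRenyi α ((∑ i, geomMix t p q i)⁻¹ • geomMix t p q)
          ((∑ i, geomMix t u w i)⁻¹ • geomMix t u w)) := by
  rcases isEmpty_or_nonempty m with hm | hm
  · simp [classicalPetzRenyi]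
  set a := ∑ i, geomMix t p q i
  set b := ∑ i, geomMix t u w i
  set X := ∑ i, geomMix α p u i
  set Y := ∑ i, geomMix α q w i
  set Z := ∑ i, geomMix t (geomMix α p u) (geomMix α q w) i
  have hnormalize : log (∑ i, geomMix α (a⁻¹ • geomMix t p q) (b⁻¹ • geomMix t u w) i)
      = log Z - α * log a - (1 - α) * log b := by
    rw [log_sum_geomMix_inv_smul_inv_smul α
      (Finset.sum_pos (fun i _ => geomMix_pos t hp hq i) Finset.univ_nonempty)
      (Finset.sum_pos (fun i _ => geomMix_pos t hu hw i) Finset.univ_nonempty)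
      (geomMix_pos t hp hq) (geomMix_pos t hu hw),
      geomMix_geomMix_comm α t (fun i => (hp i).le) (fun i => (hq i).le) (fun i => (hu i).le)
        (fun i => (hw i).le)]
  have hholder : log Z ≤ t * log X + (1 - t) * log Y :=
    log_sum_geomMix_le ht0 ht1 (geomMix_pos α hp hu) (geomMix_pos α hq hw)
  have hgap (hα : α ≠ 1) :
      t * classicalPetzRenyi α p u + (1 - t) * classicalPetzRenyi α q w
          + α / (1 - α) * log a + log b
        - classicalPetzRenyi α (a⁻¹ • geomMix t p q) (b⁻¹ • geomMix t u w)
        = 1 / (α - 1) * (t * log X + (1 - t) * log Y - log Z) := by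
    have : α - 1 ≠ 0 := sub_ne_zero.mpr hα
    have : 1 - α ≠ 0 := sub_ne_zero.mpr hα.symm
    simp only [classicalPetzRenyi, hnormalize]
    field_simp
    ring
  constructor
  · intro hα
    have : 0 ≤ 1 / (α - 1) * (t * log X + (1 - t) * log Y - log Z) :=
      mul_nonneg (one_div_nonneg.mpr (by linarith)) (by linarith)
    linarith [hgap hα.ne']
  · intro hα
    have : 1 / (α - 1) * (t * log X + (1 - t) * log Y - log Z) ≤ 0 :=
      mul_nonpos_of_nonpos_of_nonneg (one_div_nonpos.mpr (by linarith)) (by linarith)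
    linarith [hgap hα.ne]

end GeomMix

section Bridge

variable {m : Type*} [Fintype m] [DecidableEq m] (U : unitaryGroup m ℂ) (x y : m → ℝ)

lemma trace_mRpow_mul_mRpow_conjDiagonal (t : ℝ) :
    (mRpow (conjDiagonal U x) t * mRpow (conjDiagonal U y) (1 - t)).trace
      = ((∑ i, geomMix t x y i : ℝ) : ℂ) := by
  rw [mRpow_conjDiagonal, mRpow_conjDiagonal, conjDiagonal_mul_conjDiagonal, trace_conjDiagonal]
  rfl

lemma petzRenyi_conjDiagonal (α : ℝ) :
    petzRenyi α (conjDiagonal U x) (conjDiagonal U y) = classicalPetzRenyi α x y := by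
  rw [petzRenyi, trace_mRpow_mul_mRpow_conjDiagonal, Complex.ofReal_re, classicalPetzRenyi]

lemma genMix_conjDiagonal (t : ℝ) :
    genMix t (conjDiagonal U x) (conjDiagonal U y)
      = conjDiagonal U ((∑ i, geomMix t x y i)⁻¹ • geomMix t x y) := by
  rw [genMix, trace_mRpow_mul_mRpow_conjDiagonal, mRpow_conjDiagonal, mRpow_conjDiagonal,
    conjDiagonal_mul_conjDiagonal, ← Complex.ofReal_inv, smul_conjDiagonal]
  rfl

end Bridge

theorem petzRenyi_generalized_convexity_general {n : ℕ} (α t : ℝ) (ht0 : 0 ≤ t) (ht1 : t ≤ 1)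
    (ρ σ τ ω : Matrix (Fin n) (Fin n) ℂ)
    (hρ : ρ.PosDef)
    (hσ : σ.PosDef)
    (hτ : τ.PosDef)
    (hω : ω.PosDef)
    (hρσ : ρ * σ = σ * ρ) (hρτ : ρ * τ = τ * ρ) (hρω : ρ * ω = ω * ρ)
    (hστ : σ * τ = τ * σ) (hσω : σ * ω = ω * σ) (hτω : τ * ω = ω * τ) :
    (1 < α →
      petzRenyi α (genMix t ρ σ) (genMix t τ ω)
        ≤ t * petzRenyi α ρ τ + (1 - t) * petzRenyi α σ ω
          + α / (1 - α) * Real.log ((mRpow ρ t * mRpow σ (1 - t)).trace.re)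
          + Real.log ((mRpow τ t * mRpow ω (1 - t)).trace.re)) ∧
    (0 < α → α < 1 →
      t * petzRenyi α ρ τ + (1 - t) * petzRenyi α σ ω
          + α / (1 - α) * Real.log ((mRpow ρ t * mRpow σ (1 - t)).trace.re)
          + Real.log ((mRpow τ t * mRpow ω (1 - t)).trace.re)
        ≤ petzRenyi α (genMix t ρ σ) (genMix t τ ω)) := by
  have hposDef : ∀ i, (![ρ, σ, τ, ω] i).PosDef := by
    intro i
    fin_cases i <;> assumption
  have hcomm : Pairwise fun i j => Commute (![ρ, σ, τ, ω] i) (![ρ, σ, τ, ω] j) := by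
    intro i j hij
    fin_cases i <;> fin_cases j <;> simp_all [Commute, SemiconjBy]
  obtain ⟨U, d, hd⟩ :=
    exists_conjDiagonal_of_commute _ (fun i => (hposDef i).isHermitian) hcomm
  have hpos : ∀ i k, 0 < d i k := fun i => (posDef_conjDiagonal_iff U (d i)).mp (hd i ▸ hposDef i)
  obtain ⟨rfl, rfl, rfl, rfl⟩ : ρ = conjDiagonal U (d 0) ∧ σ = conjDiagonal U (d 1) ∧
      τ = conjDiagonal U (d 2) ∧ ω = conjDiagonal U (d 3) := ⟨hd 0, hd 1, hd 2, hd 3⟩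
  simp only [genMix_conjDiagonal, petzRenyi_conjDiagonal, trace_mRpow_mul_mRpow_conjDiagonal,
    Complex.ofReal_re]
  obtain ⟨hgt, hlt⟩ := classicalPetzRenyi_generalized_convexity (α := α) ht0 ht1 (hpos 0) (hpos 1)
    (hpos 2) (hpos 3)
  exact ⟨hgt, fun _ => hlt⟩

/-- Generalized convexity of the Petz–Rényi α-relative entropy on commuting states:
for `α > 1`,
`D̂_α(M_{ρ,σ}^t ‖ M_{τ,ω}^t) ≤ t D̂_α(ρ‖τ) + (1−t) D̂_α(σ‖ω)
  + (α/(1−α)) log Tr(ρ^t σ^{1−t}) + log Tr(τ^t ω^{1−t})`,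
with the reverse inequality for `0 < α < 1`. -/
theorem petzRenyi_generalized_convexity {n : ℕ} (α t : ℝ) (ht0 : 0 ≤ t) (ht1 : t ≤ 1)
    (ρ σ τ ω : Matrix (Fin n) (Fin n) ℂ)
    (hρ : ρ.PosDef) (hρ1 : ρ.trace = 1)
    (hσ : σ.PosDef) (hσ1 : σ.trace = 1)
    (hτ : τ.PosDef) (hτ1 : τ.trace = 1)
    (hω : ω.PosDef) (hω1 : ω.trace = 1)
    (hρσ : ρ * σ = σ * ρ) (hρτ : ρ * τ = τ * ρ) (hρω : ρ * ω = ω * ρ)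
    (hστ : σ * τ = τ * σ) (hσω : σ * ω = ω * σ) (hτω : τ * ω = ω * τ) :
    (1 < α →
      petzRenyi α (genMix t ρ σ) (genMix t τ ω)
        ≤ t * petzRenyi α ρ τ + (1 - t) * petzRenyi α σ ω
          + α / (1 - α) * Real.log ((mRpow ρ t * mRpow σ (1 - t)).trace.re)
          + Real.log ((mRpow τ t * mRpow ω (1 - t)).trace.re)) ∧
    (0 < α → α < 1 →
      t * petzRenyi α ρ τ + (1 - t) * petzRenyi α σ ω
          + α / (1 - α) * Real.log ((mRpow ρ t * mRpow σ (1 - t)).trace.re)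
          + Real.log ((mRpow τ t * mRpow ω (1 - t)).trace.re)
        ≤ petzRenyi α (genMix t ρ σ) (genMix t τ ω)) :=
  petzRenyi_generalized_convexity_general α t ht0 ht1 ρ σ τ ω hρ hσ hτ hω hρσ hρτ hρω hστ hσω hτω
end

section
/- Let σ be a positive definite density matrix on ℂ^n. Then σ = (1/n)·I_n if and only if for every density matrix ρ on ℂ^n one has Tr(Π_ρ σ) = rank(ρ) / rank(σ), where Π_ρ denotes the orthogonal projection onto range(ρ). Equivalently, the limit lim_{α→0⁺} S_α(ρ‖σ) = log(rank σ / rank ρ) coincides with the min-relative entropy D_min(ρ‖σ) = −log Tr(Π_ρ σ) for every density matrix ρ if and only if σ is maximally mixed. -/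
open Matrix ComplexOrder

/-- The orthogonal projection `Π_A` onto the range (support) of a Hermitian matrix,
via its spectral decomposition (and `0` if `A` is not Hermitian). -/
noncomputable def suppProj {m : Type*} [Fintype m] [DecidableEq m]
    (A : Matrix m m ℂ) : Matrix m m ℂ :=
  if hA : A.IsHermitian then
    (hA.eigenvectorUnitary : Matrix m m ℂ) *
      Matrix.diagonal (fun i => if hA.eigenvalues i = 0 then (0 : ℂ) else 1) *
      star (hA.eigenvectorUnitary : Matrix m m ℂ)
  else 0

/-! Pure states `|x⟩⟨x| / ⟨x|x⟩` have rank one and are their own support projections, so the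
condition on them says `⟨x|σ|x⟩ = ⟨x|x⟩ / n` for every `x`, and a matrix with the quadratic form
of `(1/n)·I` is `(1/n)·I` by polarization. Conversely `Tr(Π_ρ · I/n) = rank ρ / n`, and
`rank σ = n` because `σ` is invertible. The logarithmic condition says the same on pure states,
since `Tr(Π_ρ σ) > 0` there and `log` is injective on the positive reals. -/

section

variable {m : Type*} [Fintype m]

noncomputable def pureState (x : m → ℂ) : Matrix m m ℂ :=
  (star x ⬝ᵥ x)⁻¹ • vecMulVec x (star x)

theorem posSemidef_pureState (x : m → ℂ) : (pureState x).PosSemidef :=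
  (posSemidef_vecMulVec_self_star x).smul (by simp [dotProduct_star_self_nonneg x])

variable {x : m → ℂ}

theorem trace_pureState (hx : x ≠ 0) : (pureState x).trace = 1 := by
  rw [pureState, trace_smul, trace_vecMulVec, dotProduct_comm x, smul_eq_mul,
    inv_mul_cancel₀ (dotProduct_star_self_eq_zero.not.2 hx)]

theorem isIdempotentElem_pureState (hx : x ≠ 0) : IsIdempotentElem (pureState x) := by
  rw [IsIdempotentElem, pureState, smul_mul_smul_comm, vecMulVec_mul_vecMulVec, vecMulVec_smul,
    smul_smul, mul_assoc, inv_mul_cancel₀ (dotProduct_star_self_eq_zero.not.2 hx), mul_one]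

variable [DecidableEq m]

theorem Matrix.IsHermitian.eigenvalues_eq_zero_or_one {A : Matrix m m ℂ} (hA : A.IsHermitian)
    (hA' : IsIdempotentElem A) (i : m) : hA.eigenvalues i = 0 ∨ hA.eigenvalues i = 1 :=
  hA'.spectrum_subset ℝ (hA.eigenvalues_mem_spectrum_real i)

theorem suppProj_eq_self {P : Matrix m m ℂ} (hP : P.IsHermitian) (hP' : IsIdempotentElem P) :
    suppProj P = P := by
  have h : (fun i => if hP.eigenvalues i = 0 then (0 : ℂ) else 1)
      = RCLike.ofReal ∘ hP.eigenvalues := by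
    funext i
    rcases hP.eigenvalues_eq_zero_or_one hP' i with h | h <;> simp [h]
  rw [suppProj, dif_pos hP, h]
  exact hP.spectral_theorem.symm

theorem trace_suppProj {A : Matrix m m ℂ} (hA : A.IsHermitian) :
    (suppProj A).trace = A.rank := by
  rw [suppProj, dif_pos hA, trace_mul_cycle, Unitary.coe_star_mul_self, one_mul,
    trace_diagonal, hA.rank_eq_card_non_zero_eigs, Fintype.card_subtype, Finset.card_filter,
    Nat.cast_sum]
  exact Finset.sum_congr rfl fun i _ => by split_ifs <;> simp_all

theorem trace_suppProj_mul_smul_one {A : Matrix m m ℂ} (hA : A.IsHermitian) (c : ℂ) :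
    (suppProj A * c • 1).trace = c * A.rank := by
  rw [Matrix.mul_smul, mul_one, trace_smul, trace_suppProj hA, smul_eq_mul]

theorem suppProj_pureState (hx : x ≠ 0) : suppProj (pureState x) = pureState x :=
  suppProj_eq_self (posSemidef_pureState x).isHermitian (isIdempotentElem_pureState hx)

theorem rank_pureState (hx : x ≠ 0) : (pureState x).rank = 1 := by
  have h := trace_suppProj (posSemidef_pureState x).isHermitian
  rwa [suppProj_pureState hx, trace_pureState hx, eq_comm, Nat.cast_eq_one] at h

theorem trace_suppProj_pureState_mul (hx : x ≠ 0) (σ : Matrix m m ℂ) :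
    (suppProj (pureState x) * σ).trace = (star x ⬝ᵥ σ *ᵥ x) / (star x ⬝ᵥ x) := by
  rw [suppProj_pureState hx, pureState, smul_mul_assoc, trace_smul, vecMulVec_mul,
    trace_vecMulVec, dotProduct_comm x, dotProduct_mulVec, smul_eq_mul, inv_mul_eq_div]

theorem trace_suppProj_pureState_mul_pos (hx : x ≠ 0) {σ : Matrix m m ℂ} (hσ : σ.PosDef) :
    0 < (suppProj (pureState x) * σ).trace := by
  rw [trace_suppProj_pureState_mul hx]
  exact div_pos (hσ.dotProduct_mulVec_pos hx) (dotProduct_star_self_pos_iff.2 hx)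

theorem eq_smul_one_of_dotProduct_mulVec_eq {σ : Matrix m m ℂ} {c : ℂ}
    (h : ∀ x, star x ⬝ᵥ σ *ᵥ x = c * (star x ⬝ᵥ x)) : σ = c • 1 := by
  have h0 (x : m → ℂ) : star x ⬝ᵥ (σ - c • 1) *ᵥ x = 0 := by
    rw [sub_mulVec, dotProduct_sub, h, smul_mulVec, one_mulVec, dotProduct_smul, smul_eq_mul,
      sub_self]
  rw [← sub_eq_zero, ← (toLpLin 2 2).map_eq_zero_iff, ← inner_map_self_eq_zero]
  intro x
  rw [EuclideanSpace.inner_eq_star_dotProduct, toLpLin_apply, WithLp.ofLp_toLp, dotProduct_star,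
    dotProduct_comm, h0, star_zero]

theorem eq_smul_one_of_trace_suppProj_pureState_mul {σ : Matrix m m ℂ} {c : ℂ}
    (h : ∀ x ≠ 0, (suppProj (pureState x) * σ).trace = c) : σ = c • 1 := by
  refine eq_smul_one_of_dotProduct_mulVec_eq fun x => ?_
  rcases eq_or_ne x 0 with rfl | hx
  · simp
  · rw [← h x hx, trace_suppProj_pureState_mul hx,
      div_mul_cancel₀ _ (dotProduct_star_self_eq_zero.not.2 hx)]

end

theorem eq_inv_of_log_eq_neg_log_re {z : ℂ} (hz : 0 < z) {r : ℝ} (hr : 0 < r)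
    (h : Real.log r = -Real.log z.re) : z = (r : ℂ)⁻¹ := by
  obtain ⟨hre, him⟩ := Complex.pos_iff.mp hz
  rw [← Real.log_inv] at h
  rw [Real.log_injOn_pos hr (inv_pos.2 hre) h, Complex.ofReal_inv, inv_inv]
  exact Complex.ext rfl him.symm

theorem maximally_mixed_iff_trace_proj_general {n : ℕ}
    (σ : Matrix (Fin n) (Fin n) ℂ) (hσ : σ.PosDef) :
    ((σ = ((n : ℂ))⁻¹ • (1 : Matrix (Fin n) (Fin n) ℂ)) ↔
      ∀ ρ : Matrix (Fin n) (Fin n) ℂ, ρ.PosSemidef → ρ.trace = 1 →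
        (suppProj ρ * σ).trace = (ρ.rank : ℂ) / (σ.rank : ℂ)) ∧
    ((σ = ((n : ℂ))⁻¹ • (1 : Matrix (Fin n) (Fin n) ℂ)) ↔
      ∀ ρ : Matrix (Fin n) (Fin n) ℂ, ρ.PosSemidef → ρ.trace = 1 →
        Real.log ((σ.rank : ℝ) / (ρ.rank : ℝ))
          = - Real.log (((suppProj ρ * σ).trace).re)) := by
  have hrank : σ.rank = n := by rw [σ.rank_of_isUnit hσ.isUnit, Fintype.card_fin]
  have trace_of_eq (h : σ = (n : ℂ)⁻¹ • 1) {ρ : Matrix (Fin n) (Fin n) ℂ} (hρ : ρ.PosSemidef) :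
      (suppProj ρ * σ).trace = ρ.rank / σ.rank := by
    rw [hrank, h, trace_suppProj_mul_smul_one hρ.isHermitian, inv_mul_eq_div]
  refine ⟨⟨fun h ρ hρ _ => trace_of_eq h hρ, fun h => ?_⟩, ⟨fun h ρ hρ _ => ?_, fun h => ?_⟩⟩
  · refine eq_smul_one_of_trace_suppProj_pureState_mul fun x hx => ?_
    rw [h _ (posSemidef_pureState x) (trace_pureState hx), rank_pureState hx, hrank,
      Nat.cast_one, one_div]
  · rw [trace_of_eq h hρ, ← Complex.ofReal_natCast, ← Complex.ofReal_natCast σ.rank,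
      ← Complex.ofReal_div, Complex.ofReal_re, ← Real.log_inv, inv_div]
  · refine eq_smul_one_of_trace_suppProj_pureState_mul fun x hx => ?_
    obtain ⟨i, -⟩ := Function.ne_iff.mp hx
    have hx' := h _ (posSemidef_pureState x) (trace_pureState hx)
    rw [rank_pureState hx, hrank, Nat.cast_one, div_one] at hx'
    exact eq_inv_of_log_eq_neg_log_re (trace_suppProj_pureState_mul_pos hx hσ)
      (Nat.cast_pos.2 i.pos) hx'

/-- A positive definite density matrix `σ` is maximally mixed, `σ = (1/n)·I`, iff
`Tr(Π_ρ σ) = rank ρ / rank σ` for every density matrix `ρ`; equivalently, iff the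
limit `log(rank σ / rank ρ)` of `S_α(ρ‖σ)` as `α → 0⁺` coincides with the
min-relative entropy `D_min(ρ‖σ) = −log Tr(Π_ρ σ)` for every density matrix `ρ`. -/
theorem maximally_mixed_iff_trace_proj {n : ℕ} (hn : 0 < n)
    (σ : Matrix (Fin n) (Fin n) ℂ) (hσ : σ.PosDef) (hσ1 : σ.trace = 1) :
    ((σ = ((n : ℂ))⁻¹ • (1 : Matrix (Fin n) (Fin n) ℂ)) ↔
      ∀ ρ : Matrix (Fin n) (Fin n) ℂ, ρ.PosSemidef → ρ.trace = 1 →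
        (suppProj ρ * σ).trace = (ρ.rank : ℂ) / (σ.rank : ℂ)) ∧
    ((σ = ((n : ℂ))⁻¹ • (1 : Matrix (Fin n) (Fin n) ℂ)) ↔
      ∀ ρ : Matrix (Fin n) (Fin n) ℂ, ρ.PosSemidef → ρ.trace = 1 →
        Real.log ((σ.rank : ℝ) / (ρ.rank : ℝ))
          = - Real.log (((suppProj ρ * σ).trace).re)) :=
  maximally_mixed_iff_trace_proj_general σ hσ
end

section
/- Let α > 0 with α ≠ 1, and let ρ and σ be density matrices on ℂ^n with σ positive definite. Then the quantum density power divergence S̄_α(ρ‖σ) = (α/(1−α))·Tr(ρ σ^{α−1}) − (1/(1−α))·Tr(ρ^α) + Tr(σ^α) is nonnegative: S̄_α(ρ‖σ) ≥ 0, with equality if and only if ρ = σ. -/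
open Matrix ComplexOrder

/-- The quantum density power divergence
`S̄_α(ρ‖σ) = (α/(1−α))·Tr(ρσ^{α−1}) − (1/(1−α))·Tr(ρ^α) + Tr(σ^α)`. -/
noncomputable def Sbar {m : Type*} [Fintype m] [DecidableEq m]
    (α : ℝ) (ρ σ : Matrix m m ℂ) : ℝ :=
  α / (1 - α) * ((ρ * mRpow σ (α - 1)).trace.re)
    - 1 / (1 - α) * ((mRpow ρ α).trace.re)
    + ((mRpow σ α).trace.re)

/-!
Diagonalize `ρ = U diag(λ) U*` and `σ = V diag(μ) V*`. The matrix `c i j = |(U* V) i j|²` is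
doubly stochastic and `Tr(ρ σ^(α-1)) = ∑ c i j λ i μ j ^ (α-1)`, so
`S̄_α(ρ‖σ) = ∑ c i j s_α(λ i, μ j)`, where `s_α = scalarSbar α` is the same expression for
commuting scalars. Bernoulli's inequality gives `s_α(x, y) > 0` for `x ≠ y`, hence `S̄_α ≥ 0`;
and `S̄_α = 0` forces `(U* V) i j = 0` whenever `λ i ≠ μ j`, i.e. `U* V` intertwines `diag μ`
with `diag λ`, which says `ρ = σ`.
-/

noncomputable def scalarSbar (α x y : ℝ) : ℝ :=
  α / (1 - α) * (x * y ^ (α - 1)) - 1 / (1 - α) * x ^ α + y ^ α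

section Scalar

variable {α : ℝ}

lemma scalarSbar_eq_rpow_mul {x y : ℝ} (hx : 0 ≤ x) (hy : 0 < y) :
    scalarSbar α x y = y ^ α * scalarSbar α (x / y) 1 := by
  have hyα : y * y ^ (α - 1) = y ^ α := by
    rw [Real.rpow_sub hy, Real.rpow_one]; field_simp
  simp only [scalarSbar, Real.one_rpow, mul_one, Real.div_rpow hx hy.le]
  rw [← hyα]
  field_simp

lemma scalarSbar_one_right_pos (hα : 0 < α) (hα1 : α ≠ 1) {t : ℝ} (ht : 0 ≤ t) (ht1 : t ≠ 1) :
    0 < scalarSbar α t 1 := by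
  have hs : -1 ≤ t - 1 := by linarith
  have hs0 : t - 1 ≠ 0 := sub_ne_zero.mpr ht1
  have h1s : 1 + (t - 1) = t := by ring
  have hform : scalarSbar α t 1 = (1 + α * (t - 1) - t ^ α) / (1 - α) := by
    have : 1 - α ≠ 0 := sub_ne_zero.mpr hα1.symm
    simp only [scalarSbar, Real.one_rpow, mul_one]
    field_simp
    ring
  rw [hform]
  rcases hα1.lt_or_gt with h | h
  · have := rpow_one_add_lt_one_add_mul_self hs hs0 hα h
    rw [h1s] at this
    exact div_pos (by linarith) (by linarith)
  · have := one_add_mul_self_lt_rpow_one_add hs hs0 h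
    rw [h1s] at this
    exact div_pos_of_neg_of_neg (by linarith) (by linarith)

lemma scalarSbar_pos (hα : 0 < α) (hα1 : α ≠ 1) {x y : ℝ} (hx : 0 ≤ x) (hy : 0 < y)
    (hxy : x ≠ y) : 0 < scalarSbar α x y := by
  rw [scalarSbar_eq_rpow_mul hx hy]
  refine mul_pos (Real.rpow_pos_of_pos hy α) (scalarSbar_one_right_pos hα hα1 ?_ ?_)
  · exact div_nonneg hx hy.le
  · rwa [ne_eq, div_eq_one_iff_eq hy.ne']

lemma scalarSbar_self (hα1 : α ≠ 1) {y : ℝ} (hy : 0 < y) : scalarSbar α y y = 0 := by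
  rw [scalarSbar_eq_rpow_mul hy.le hy, div_self hy.ne']
  have : 1 - α ≠ 0 := sub_ne_zero.mpr hα1.symm
  simp only [scalarSbar, Real.one_rpow, mul_one]
  field_simp
  ring

lemma scalarSbar_nonneg (hα : 0 < α) (hα1 : α ≠ 1) {x y : ℝ} (hx : 0 ≤ x) (hy : 0 < y) :
    0 ≤ scalarSbar α x y := by
  rcases eq_or_ne x y with rfl | hxy
  · exact (scalarSbar_self hα1 hy).ge
  · exact (scalarSbar_pos hα hα1 hx hy hxy).le

end Scalar

section Matrix

variable {m : Type*} [Fintype m] [DecidableEq m]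

lemma sum_normSq_row_of_mem_unitaryGroup {W : Matrix m m ℂ}
    (hW : W ∈ unitaryGroup m ℂ) (i : m) : ∑ j, Complex.normSq (W i j) = 1 := by
  have h := congrFun (congrFun (mem_unitaryGroup_iff.mp hW) i) i
  simp only [mul_apply, star_apply, one_apply_eq, Complex.star_def, Complex.mul_conj] at h
  exact_mod_cast h

lemma sum_normSq_col_of_mem_unitaryGroup {W : Matrix m m ℂ}
    (hW : W ∈ unitaryGroup m ℂ) (j : m) : ∑ i, Complex.normSq (W i j) = 1 := by
  simpa [star_apply] using
    sum_normSq_row_of_mem_unitaryGroup (Unitary.star_mem hW) j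

lemma trace_unitary_conj_diagonal (U : unitaryGroup m ℂ) (d : m → ℂ) :
    ((U : Matrix m m ℂ) * diagonal d * star (U : Matrix m m ℂ)).trace = ∑ i, d i := by
  rw [trace_mul_cycle, Unitary.coe_star_mul_self, one_mul, trace_diagonal]

lemma trace_unitary_conj_diagonal_mul (U V : unitaryGroup m ℂ) (d e : m → ℂ) :
    ((U : Matrix m m ℂ) * diagonal d * star (U : Matrix m m ℂ) *
        ((V : Matrix m m ℂ) * diagonal e * star (V : Matrix m m ℂ))).trace
      = ∑ i, ∑ j, d i * e j * Complex.normSq ((star (U : Matrix m m ℂ) * V) i j) := by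
  set W := star (U : Matrix m m ℂ) * V
  have hcycle : ((U : Matrix m m ℂ) * diagonal d * star (U : Matrix m m ℂ) *
        ((V : Matrix m m ℂ) * diagonal e * star (V : Matrix m m ℂ))).trace
      = (diagonal d * W * diagonal e * star W).trace := by
    rw [star_mul, star_star]
    simp only [W, Matrix.mul_assoc]
    rw [trace_mul_comm]
    simp only [Matrix.mul_assoc]
  rw [hcycle]
  refine Finset.sum_congr rfl fun i _ => ?_
  rw [diag_apply, mul_apply]
  refine Finset.sum_congr rfl fun j _ => ?_
  rw [mul_diagonal, diagonal_mul, star_apply, Complex.star_def, ← Complex.mul_conj]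
  ring

lemma mRpow_of_isHermitian {A : Matrix m m ℂ} (hA : A.IsHermitian) (r : ℝ) :
    mRpow A r = (hA.eigenvectorUnitary : Matrix m m ℂ) *
      diagonal (fun i => ((hA.eigenvalues i ^ r : ℝ) : ℂ)) *
        star (hA.eigenvectorUnitary : Matrix m m ℂ) :=
  dif_pos hA

lemma Matrix.IsHermitian.eq_unitary_conj_diagonal {A : Matrix m m ℂ} (hA : A.IsHermitian) :
    A = (hA.eigenvectorUnitary : Matrix m m ℂ) * diagonal (fun i => (hA.eigenvalues i : ℂ)) *
      star (hA.eigenvectorUnitary : Matrix m m ℂ) :=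
  hA.spectral_theorem

theorem Sbar_eq_sum_normSq_mul_scalarSbar {ρ σ : Matrix m m ℂ} (hρ : ρ.IsHermitian)
    (hσ : σ.IsHermitian) (α : ℝ) :
    Sbar α ρ σ = ∑ i, ∑ j, Complex.normSq
        ((star (hρ.eigenvectorUnitary : Matrix m m ℂ) * hσ.eigenvectorUnitary) i j) *
      scalarSbar α (hρ.eigenvalues i) (hσ.eigenvalues j) := by
  set U := hρ.eigenvectorUnitary
  set V := hσ.eigenvectorUnitary
  set c := fun i j => Complex.normSq ((star (U : Matrix m m ℂ) * V) i j)
  have hW : star (U : Matrix m m ℂ) * V ∈ unitaryGroup m ℂ :=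
    mul_mem (Unitary.star_mem U.2) V.2
  have h1 : (ρ * mRpow σ (α - 1)).trace.re =
      ∑ i, ∑ j, hρ.eigenvalues i * hσ.eigenvalues j ^ (α - 1) * c i j := by
    conv_lhs => rw [hρ.eq_unitary_conj_diagonal, mRpow_of_isHermitian hσ,
      trace_unitary_conj_diagonal_mul]
    simp only [Complex.re_sum, ← Complex.ofReal_mul, Complex.ofReal_re, c, U, V]
  have h2 : (mRpow ρ α).trace.re = ∑ i, ∑ j, c i j * hρ.eigenvalues i ^ α := by
    rw [mRpow_of_isHermitian hρ, trace_unitary_conj_diagonal]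
    simp only [Complex.re_sum, Complex.ofReal_re, ← Finset.sum_mul, c,
      sum_normSq_row_of_mem_unitaryGroup hW, one_mul]
  have h3 : (mRpow σ α).trace.re = ∑ i, ∑ j, c i j * hσ.eigenvalues j ^ α := by
    rw [mRpow_of_isHermitian hσ, trace_unitary_conj_diagonal, Finset.sum_comm]
    simp only [Complex.re_sum, Complex.ofReal_re, ← Finset.sum_mul, c,
      sum_normSq_col_of_mem_unitaryGroup hW, one_mul]
  rw [Sbar, h1, h2, h3]
  simp only [scalarSbar, Finset.mul_sum, ← Finset.sum_sub_distrib, ← Finset.sum_add_distrib]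
  refine Finset.sum_congr rfl fun i _ => Finset.sum_congr rfl fun j _ => ?_
  ring

lemma mul_diagonal_eq_diagonal_mul {W : Matrix m m ℂ} {d e : m → ℂ}
    (h : ∀ i j, W i j = 0 ∨ d i = e j) : W * diagonal e = diagonal d * W := by
  ext i j
  rw [mul_diagonal, diagonal_mul]
  rcases h i j with h | h <;> simp [h, mul_comm]

lemma unitary_conj_eq_of_mul_eq (U V : unitaryGroup m ℂ) {D E : Matrix m m ℂ}
    (h : star (U : Matrix m m ℂ) * V * E = D * (star (U : Matrix m m ℂ) * V)) :
    (U : Matrix m m ℂ) * D * star (U : Matrix m m ℂ) = V * E * star (V : Matrix m m ℂ) := by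
  have hU : (U : Matrix m m ℂ) * star (U : Matrix m m ℂ) = 1 := mem_unitaryGroup_iff.mp U.2
  have hV : (V : Matrix m m ℂ) * star (V : Matrix m m ℂ) = 1 := mem_unitaryGroup_iff.mp V.2
  calc (U : Matrix m m ℂ) * D * star (U : Matrix m m ℂ)
      = U * (D * (star (U : Matrix m m ℂ) * V)) * star (V : Matrix m m ℂ) := by
        simp only [Matrix.mul_assoc, hV, Matrix.mul_one]
    _ = U * (star (U : Matrix m m ℂ) * V * E) * star (V : Matrix m m ℂ) := by rw [h]
    _ = V * E * star (V : Matrix m m ℂ) := by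
        simp only [← Matrix.mul_assoc, hU, Matrix.one_mul]

variable {α : ℝ} {ρ σ : Matrix m m ℂ}

lemma Sbar_nonneg (hα : 0 < α) (hα1 : α ≠ 1) (hρ : ρ.PosSemidef) (hσ : σ.PosDef) :
    0 ≤ Sbar α ρ σ := by
  rw [Sbar_eq_sum_normSq_mul_scalarSbar hρ.1 hσ.1]
  exact Finset.sum_nonneg fun i _ => Finset.sum_nonneg fun j _ => mul_nonneg
    (Complex.normSq_nonneg _)
    (scalarSbar_nonneg hα hα1 (hρ.eigenvalues_nonneg i) (hσ.eigenvalues_pos j))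

lemma Sbar_self (hα1 : α ≠ 1) (hσ : σ.PosDef) : Sbar α σ σ = 0 := by
  rw [Sbar_eq_sum_normSq_mul_scalarSbar hσ.1 hσ.1, Unitary.coe_star_mul_self]
  refine Finset.sum_eq_zero fun i _ => Finset.sum_eq_zero fun j _ => ?_
  rcases eq_or_ne i j with rfl | hij
  · rw [scalarSbar_self hα1 (hσ.eigenvalues_pos i), mul_zero]
  · rw [one_apply_ne hij, map_zero, zero_mul]

lemma eq_of_Sbar_eq_zero (hα : 0 < α) (hα1 : α ≠ 1) (hρ : ρ.PosSemidef) (hσ : σ.PosDef)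
    (h : Sbar α ρ σ = 0) : ρ = σ := by
  set U := hρ.1.eigenvectorUnitary
  set V := hσ.1.eigenvectorUnitary
  set W := star (U : Matrix m m ℂ) * V
  have hterm : ∀ i j,
      0 ≤ Complex.normSq (W i j) * scalarSbar α (hρ.1.eigenvalues i) (hσ.1.eigenvalues j) :=
    fun i j => mul_nonneg (Complex.normSq_nonneg _)
      (scalarSbar_nonneg hα hα1 (hρ.eigenvalues_nonneg i) (hσ.eigenvalues_pos j))
  rw [Sbar_eq_sum_normSq_mul_scalarSbar hρ.1 hσ.1,
    Fintype.sum_eq_zero_iff_of_nonneg fun i => Finset.sum_nonneg fun j _ => hterm i j] at h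
  have hW : ∀ i j, W i j = 0 ∨ (hρ.1.eigenvalues i : ℂ) = hσ.1.eigenvalues j := by
    intro i j
    have hij := (Fintype.sum_eq_zero_iff_of_nonneg (hterm i)).1 (congrFun h i)
    rcases mul_eq_zero.1 (congrFun hij j) with h0 | h0
    · exact .inl (Complex.normSq_eq_zero.1 h0)
    · refine .inr (congrArg _ ?_)
      by_contra hne
      exact (scalarSbar_pos hα hα1 (hρ.eigenvalues_nonneg i) (hσ.eigenvalues_pos j) hne).ne' h0
  rw [hρ.1.eq_unitary_conj_diagonal, hσ.1.eq_unitary_conj_diagonal]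
  exact unitary_conj_eq_of_mul_eq U V (mul_diagonal_eq_diagonal_mul hW)

end Matrix

theorem Sbar_nonneg_and_eq_zero_iff_general {n : ℕ} (α : ℝ) (hα : 0 < α) (hα1 : α ≠ 1)
    (ρ σ : Matrix (Fin n) (Fin n) ℂ)
    (hρ : ρ.PosSemidef)
    (hσ : σ.PosDef) :
    0 ≤ Sbar α ρ σ ∧ (Sbar α ρ σ = 0 ↔ ρ = σ) :=
  ⟨Sbar_nonneg hα hα1 hρ hσ, eq_of_Sbar_eq_zero hα hα1 hρ hσ, by rintro rfl; exact Sbar_self hα1 hσ⟩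

/-- Nonnegativity of the quantum density power divergence, with equality iff `ρ = σ`. -/
theorem Sbar_nonneg_and_eq_zero_iff {n : ℕ} (α : ℝ) (hα : 0 < α) (hα1 : α ≠ 1)
    (ρ σ : Matrix (Fin n) (Fin n) ℂ)
    (hρ : ρ.PosSemidef) (hρ1 : ρ.trace = 1)
    (hσ : σ.PosDef) (hσ1 : σ.trace = 1) :
    0 ≤ Sbar α ρ σ ∧ (Sbar α ρ σ = 0 ↔ ρ = σ) :=
  Sbar_nonneg_and_eq_zero_iff_general α hα hα1 ρ σ hρ hσ
end
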